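/- The space ℛ^m of homogeneous regular polynomials of degree m in the free associative algebra on X₁,…,Xₙ over a field K of characteristic zero admits a basis consisting entirely of m-th powers of linear forms, i.e., elements fᵢ = (c₁ⁱX₁+⋯+cₙⁱXₙ)^m, 1 ≤ i ≤ C(n+m-1,m), with cⱼⁱ ∈ K; in particular ℛ^m has dimension C(n+m-1,m). -/

import Mathlib

open scoped BigOperators

noncomputable section

/-- The word `X₁^{α₁} ⋯ Xₙ^{αₙ}` as a list of generator indices. -/
def word (n : ℕ) (α : Fin n → ℕ) : List (Fin n) :=
  (List.finRange n).flatMap fun i => List.replicate (α i) i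

/-- The symmetrization `symz(X^(α)) = (1/m!) ∑_{σ ∈ Σₘ} X'_{σ(1)} ⋯ X'_{σ(m)}`
of the monomial `X^(α)` in the free associative algebra. -/
def symz (K : Type) [Field K] (n : ℕ) (α : Fin n → ℕ) : FreeAlgebra K (Fin n) :=
  ((Nat.factorial (word n α).length : K))⁻¹ •
    ∑ σ : Equiv.Perm (Fin (word n α).length),
      (List.ofFn fun j => FreeAlgebra.ι K ((word n α).get (σ j))).prod

/-- Regular homogeneous polynomials of degree `m`: the span of `m`-th powers of
linear forms in the generators. -/
def RegHom (K : Type) [Field K] (n m : ℕ) : Submodule K (FreeAlgebra K (Fin n)) :=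
  Submodule.span K {x | ∃ c : Fin n → K, x = (∑ i, c i • FreeAlgebra.ι K i) ^ m}

/-- Regular polynomials: the span of all powers of linear forms in the generators. -/
def Reg (K : Type) [Field K] (n : ℕ) : Submodule K (FreeAlgebra K (Fin n)) :=
  Submodule.span K {x | ∃ (m : ℕ) (c : Fin n → K), x = (∑ i, c i • FreeAlgebra.ι K i) ^ m}

/-- The symmetrization map `Φ` from commutative polynomials to the free algebra,
sending `x^(α)` to `symz(X^(α))` and extended linearly. -/
def Phi (K : Type) [Field K] (n : ℕ) (p : MvPolynomial (Fin n) K) : FreeAlgebra K (Fin n) :=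
  ∑ d ∈ p.support, p.coeff d • symz K n (fun i => d i)

/-!
Expanding, `(∑ cᵢ Xᵢ)^m = ∑ₛ cˢ • Tₛ`, where `s` runs over the multisets of size `m` of variables
and `Tₛ` is the sum of all words whose multiset of letters is `s`. The `Tₛ` are sums over disjoint
nonempty sets of words, hence linearly independent. Since `K` is infinite, a polynomial identity in
`c` holds coefficientwise; applied in the quotient by the span of the `m`-th powers, this puts
every `Tₛ` in that span. So the `Tₛ` form a basis of `ℛ^m`, of cardinality
`#(Sym (Fin n) m) = (n + m - 1).choose m`, and a basis can be extracted from the spanning family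
of `m`-th powers.
-/

open Finset Module Submodule

def Sym.ofFn {α : Type*} {m : ℕ} (f : Fin m → α) : Sym α m := ⟨List.ofFn f, by simp⟩

theorem Sym.ofFn_surjective (α : Type*) (m : ℕ) :
    Function.Surjective (Sym.ofFn : (Fin m → α) → Sym α m) := by
  rintro ⟨s, hs⟩
  obtain ⟨l, rfl⟩ := Quot.exists_rep s
  obtain rfl : l.length = m := hs
  exact ⟨l.get, Sym.coe_injective (by simp [Sym.ofFn])⟩

theorem Sym.prod_map_ofFn {α M : Type*} [CommMonoid M] {m : ℕ} (f : Fin m → α) (g : α → M) :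
    ((Sym.ofFn f).1.map g).prod = ∏ j, g (f j) := by
  simp [Sym.ofFn, List.map_ofFn, List.prod_ofFn]

theorem sum_pow_eq_sum_prod_ofFn {σ A : Type*} [Fintype σ] [Semiring A] (a : σ → A) (m : ℕ) :
    (∑ i, a i) ^ m = ∑ f : Fin m → σ, (List.ofFn fun j => a (f j)).prod := by
  induction m with
  | zero => simp
  | succ m ih =>
    rw [pow_succ', ih, sum_mul_sum, ← (Fin.consEquiv fun _ => σ).sum_comp, Fintype.sum_prod_type]
    simp [List.ofFn_succ]

theorem List.prod_ofFn_smul {R A : Type*} [CommSemiring R] [Semiring A] [Algebra R A] {m : ℕ}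
    (c : Fin m → R) (x : Fin m → A) :
    (List.ofFn fun j => c j • x j).prod = (∏ j, c j) • (List.ofFn x).prod := by
  induction m with
  | zero => simp
  | succ m ih => simp [List.ofFn_succ, ih, Fin.prod_univ_succ, smul_smul, mul_comm]

theorem LinearIndependent.sum_fiberwise {ι κ R M : Type*} [Fintype ι] [Fintype κ] [DecidableEq κ]
    [Ring R] [AddCommGroup M] [Module R M] {v : ι → M} (hv : LinearIndependent R v) {g : ι → κ}
    (hg : Function.Surjective g) : LinearIndependent R fun k => ∑ i with g i = k, v i := by
  rw [Fintype.linearIndependent_iff] at hv ⊢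
  intro a ha k
  obtain ⟨i, rfl⟩ := hg k
  refine hv (a ∘ g) ?_ i
  rw [← ha, ← Finset.sum_fiberwise univ g]
  refine sum_congr rfl fun k _ => ?_
  rw [smul_sum]
  exact sum_congr rfl fun j hj => by rw [Function.comp_apply, (mem_filter.mp hj).2]

theorem exists_linearIndependent_fin_span_eq {K V ι : Type*} [DivisionRing K] [AddCommGroup V]
    [Module K V] (v : ι → V) [FiniteDimensional K (span K (Set.range v))] {N : ℕ}
    (hN : finrank K (span K (Set.range v)) = N) :
    ∃ a : Fin N → ι,
      LinearIndependent K (v ∘ a) ∧ span K (Set.range (v ∘ a)) = span K (Set.range v) := by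
  obtain ⟨κ, a, -, hspan, hli⟩ := exists_linearIndependent' K v
  have : FiniteDimensional K (span K (Set.range (v ∘ a))) := hspan ▸ inferInstance
  have : Fintype κ := @Fintype.ofFinite _ (linearIndependent_span hli).finite
  have hcard : Fintype.card κ = N := by rw [← finrank_span_eq_card hli, hspan, hN]
  let e := Fintype.equivFinOfCardEq hcard
  refine ⟨a ∘ e.symm, hli.comp _ e.symm.injective, ?_⟩
  rw [← hspan, ← Function.comp_assoc, EquivLike.range_comp]

theorem MvPolynomial.prod_map_X_eq_monomial {σ R : Type*} [CommSemiring R] [DecidableEq σ]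
    (s : Multiset σ) : (s.map X).prod = monomial (Multiset.toFinsupp s) (1 : R) := by
  induction s using Multiset.induction_on with
  | empty => simp
  | cons a s ih =>
    simp [ih, ← Multiset.singleton_add, Multiset.toFinsupp_add, X, monomial_mul]

theorem MvPolynomial.linearIndependent_prod_map_X (σ R : Type*) [CommSemiring R] (m : ℕ) :
    LinearIndependent R fun s : Sym σ m => (s.1.map (X : σ → MvPolynomial σ R)).prod := by
  classical
  simp_rw [prod_map_X_eq_monomial]
  exact (basisMonomials σ R).linearIndependent.comp _
    (Multiset.toFinsupp.injective.comp Sym.coe_injective)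

theorem LinearIndependent.eq_zero_of_forall_sum_eval_smul_eq_zero {K σ ι V : Type*} [Field K]
    [Infinite K] [Fintype ι] [AddCommGroup V] [Module K V] {p : ι → MvPolynomial σ K}
    (hp : LinearIndependent K p) {u : ι → V}
    (h : ∀ c : σ → K, ∑ i, MvPolynomial.eval c (p i) • u i = 0) : u = 0 := by
  funext i
  refine (Module.forall_dual_apply_eq_zero_iff K (u i)).mp fun φ => ?_
  have hφ : ∑ j, φ (u j) • p j = 0 := MvPolynomial.funext fun c => by
    simpa [map_sum, MvPolynomial.smul_eval, mul_comm] using congrArg φ (h c)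
  exact Fintype.linearIndependent_iff.mp hp _ hφ i

namespace FreeAlgebra

section CommSemiring

variable (R : Type*) [CommSemiring R] {X : Type*} {m : ℕ}

def monomialOfFn (f : Fin m → X) : FreeAlgebra R X := (List.ofFn fun j => ι R (f j)).prod

theorem basisFreeMonoid_ofList_ofFn (f : Fin m → X) :
    basisFreeMonoid R X (FreeMonoid.ofList (List.ofFn f)) = monomialOfFn R f := by
  simp [basisFreeMonoid, equivMonoidAlgebraFreeMonoid, monomialOfFn, List.map_ofFn,
    Function.comp_def]

theorem linearIndependent_monomialOfFn :
    LinearIndependent R (monomialOfFn R : (Fin m → X) → FreeAlgebra R X) := by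
  simpa [Function.comp_def, basisFreeMonoid_ofList_ofFn] using
    (basisFreeMonoid R X).linearIndependent.comp _
      (FreeMonoid.ofList.injective.comp List.ofFn_injective)

variable [Fintype X] [DecidableEq X]

def symMonomial (s : Sym X m) : FreeAlgebra R X := ∑ f with Sym.ofFn f = s, monomialOfFn R f

theorem sum_smul_ι_pow_eq_sum_symMonomial (c : X → R) :
    (∑ i, c i • ι R i) ^ m = ∑ s : Sym X m, (s.1.map c).prod • symMonomial R s := by
  rw [sum_pow_eq_sum_prod_ofFn]
  simp_rw [List.prod_ofFn_smul]
  rw [← Finset.sum_fiberwise univ Sym.ofFn]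
  refine sum_congr rfl fun s _ => ?_
  rw [symMonomial, smul_sum]
  refine sum_congr rfl fun f hf => ?_
  rw [← (mem_filter.mp hf).2, Sym.prod_map_ofFn, monomialOfFn]

end CommSemiring

theorem linearIndependent_symMonomial (R : Type*) [CommRing R] {X : Type*} [Fintype X]
    [DecidableEq X] {m : ℕ} : LinearIndependent R (symMonomial R : Sym X m → FreeAlgebra R X) :=
  (linearIndependent_monomialOfFn R).sum_fiberwise (Sym.ofFn_surjective X m)

theorem span_pow_eq_span_symMonomial (K : Type*) [Field K] [Infinite K] {X : Type*} [Fintype X]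
    [DecidableEq X] (m : ℕ) :
    span K (Set.range fun c : X → K => (∑ i, c i • ι K i) ^ m) =
      span K (Set.range (symMonomial K : Sym X m → FreeAlgebra K X)) := by
  refine le_antisymm (span_le.mpr ?_) (span_le.mpr ?_)
  · rintro _ ⟨c, rfl⟩
    dsimp only
    rw [sum_smul_ι_pow_eq_sum_symMonomial]
    exact sum_mem fun s _ => smul_mem _ _ (subset_span ⟨s, rfl⟩)
  · rintro _ ⟨s, rfl⟩
    set W := span K (Set.range fun c : X → K => (∑ i, c i • ι K i) ^ m)
    suffices h : (fun s => W.mkQ (symMonomial K s)) = 0 by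
      simpa using congrFun h s
    refine (MvPolynomial.linearIndependent_prod_map_X X K m).eq_zero_of_forall_sum_eval_smul_eq_zero
      fun c => ?_
    have heval : ∀ s : Sym X m,
        MvPolynomial.eval c (s.1.map MvPolynomial.X).prod = (s.1.map c).prod := by
      simp [map_multiset_prod, Multiset.map_map]
    simp_rw [heval, ← map_smul, ← map_sum, ← sum_smul_ι_pow_eq_sum_symMonomial]
    exact (Submodule.Quotient.mk_eq_zero W).mpr (subset_span ⟨c, rfl⟩)

end FreeAlgebra

theorem RegHom_basis_of_powers (K : Type) [Field K] [CharZero K] (n m : ℕ) :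
    (∃ c : Fin ((n + m - 1).choose m) → Fin n → K,
        LinearIndependent K (fun i => (∑ j, c i j • FreeAlgebra.ι K j) ^ m) ∧
        Submodule.span K (Set.range fun i => (∑ j, c i j • FreeAlgebra.ι K j) ^ m)
          = RegHom K n m) ∧
    Module.finrank K (RegHom K n m) = (n + m - 1).choose m := by
  set v : (Fin n → K) → FreeAlgebra K (Fin n) := fun c => (∑ j, c j • FreeAlgebra.ι K j) ^ m
  have hRegHom : RegHom K n m = span K (Set.range v) := by
    simp only [RegHom, Set.range, eq_comm, v]
  have hspan : RegHom K n m =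
      span K (Set.range (FreeAlgebra.symMonomial K : Sym (Fin n) m → _)) :=
    hRegHom.trans (FreeAlgebra.span_pow_eq_span_symMonomial K m)
  have hrank : finrank K (RegHom K n m) = (n + m - 1).choose m := by
    rw [hspan, finrank_span_eq_card (FreeAlgebra.linearIndependent_symMonomial K),
      Sym.card_sym_eq_choose, Fintype.card_fin]
  have : FiniteDimensional K (span K (Set.range v)) := by
    rw [← hRegHom, hspan]
    exact FiniteDimensional.span_of_finite K (Set.finite_range _)
  obtain ⟨c, hli, hc⟩ := exists_linearIndependent_fin_span_eq v (hRegHom ▸ hrank)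
  exact ⟨⟨c, hli, hc.trans hRegHom.symm⟩, hrank⟩

end
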